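/- arXiv:2411.06888 — 2 statements merged into one kernel-verified Lean document; each statement's English description precedes it below -/
import Mathlib

section
/- For integers p, q ≥ 1, the function φ(u) = (1/(p+q+1)) · [∫₀¹ y^{q−1}(yu+1)^{−(p+q+1)} dy]/[∫₀¹ y^{q−1}(yu+1)^{−(p+q+2)} dy] satisfies lim_{u→∞} φ(u) = 1/(p+1). -/
/-!
After the substitution `t = y u`, both integrals become `u^{-q} ∫₀^u t^{q-1} (t+1)^{-n} dt`, so
as `u → ∞` the ratio tends to `B_n / B_{n+1}` with `B_n = ∫₀^∞ t^{q-1} (t+1)^{-n} dt`, a Beta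
integral of the second kind. Splitting `1 = (t+1) - t` in the integrand and integrating
`t^q (t+1)^{-n}` by parts give `(n - q) B_n = n B_{n+1}`; for `n = p + q + 1` this makes the limit
`1 / (p + 1)`.
-/

open MeasureTheory Set Filter Topology

/-- For `k + m < -1` this is the Beta function `B(k + 1, -m - k - 1)`. -/
noncomputable def betaPrimeIntegral (k : ℕ) (m : ℤ) : ℝ :=
  ∫ t in Ioi (0 : ℝ), t ^ k * (t + 1) ^ m

section BetaPrimeIntegral

variable {k : ℕ} {m : ℤ}

lemma continuousOn_pow_mul_add_one_zpow (k : ℕ) (m : ℤ) :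
    ContinuousOn (fun t : ℝ => t ^ k * (t + 1) ^ m) (Ici 0) :=
  (continuousOn_pow k).mul <| (continuousOn_id.add continuousOn_const).zpow₀ m
    fun t ht => Or.inl (show t + 1 ≠ 0 by have := mem_Ici.mp ht; positivity)

lemma pow_mul_add_one_zpow_le (k : ℕ) (m : ℤ) {t : ℝ} (ht : 0 ≤ t) :
    t ^ k * (t + 1) ^ m ≤ (t + 1) ^ ((k : ℤ) + m) := by
  calc t ^ k * (t + 1) ^ m ≤ (t + 1) ^ k * (t + 1) ^ m := by gcongr; linarith
    _ = (t + 1) ^ ((k : ℤ) + m) := by rw [zpow_add₀ (by positivity), zpow_natCast]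

lemma integrableOn_pow_mul_add_one_zpow (hkm : (k : ℤ) + m < -1) :
    IntegrableOn (fun t : ℝ => t ^ k * (t + 1) ^ m) (Ioi 0) := by
  refine (integrableOn_add_rpow_Ioi_of_lt (a := ((k : ℤ) + m : ℤ)) (by exact_mod_cast hkm)
    (m := 1) (c := 0) (by norm_num)).mono' ?_ ?_
  · exact ((continuousOn_pow_mul_add_one_zpow k m).mono Ioi_subset_Ici_self).aestronglyMeasurable
      measurableSet_Ioi
  · filter_upwards [ae_restrict_mem measurableSet_Ioi] with t (ht : 0 < t)
    rw [Real.norm_of_nonneg (by positivity), Real.rpow_intCast]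
    exact pow_mul_add_one_zpow_le k m ht.le

lemma betaPrimeIntegral_pos (hkm : (k : ℤ) + m < -1) : 0 < betaPrimeIntegral k m := by
  have hpos : ∀ t ∈ Ioi (0 : ℝ), 0 < t ^ k * (t + 1) ^ m := fun t (ht : 0 < t) => by positivity
  rw [betaPrimeIntegral, setIntegral_pos_iff_support_of_nonneg_ae
    ((ae_restrict_iff' measurableSet_Ioi).2 (.of_forall fun t ht => (hpos t ht).le))
    (integrableOn_pow_mul_add_one_zpow hkm),
    inter_eq_self_of_subset_right
      (show Ioi (0 : ℝ) ⊆ Function.support _ from fun t ht => (hpos t ht).ne'), Real.volume_Ioi]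
  exact ENNReal.zero_lt_top

lemma betaPrimeIntegral_eq_add (hkm : (k : ℤ) + m < -1) :
    betaPrimeIntegral k m = betaPrimeIntegral k (m - 1) + betaPrimeIntegral (k + 1) (m - 1) := by
  have hsplit : ∀ t ∈ Ioi (0 : ℝ),
      t ^ k * (t + 1) ^ m = t ^ k * (t + 1) ^ (m - 1) + t ^ (k + 1) * (t + 1) ^ (m - 1) :=
    fun t (ht : 0 < t) => by
      rw [zpow_sub_one₀ (by positivity)]
      field_simp
      ring
  rw [betaPrimeIntegral, setIntegral_congr_fun measurableSet_Ioi hsplit,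
    integral_add (integrableOn_pow_mul_add_one_zpow (by omega))
      (integrableOn_pow_mul_add_one_zpow (by push_cast; omega))]
  rfl

lemma hasDerivAt_pow_succ_mul_add_one_zpow (k : ℕ) (m : ℤ) {t : ℝ} (ht : t + 1 ≠ 0) :
    HasDerivAt (fun t : ℝ => t ^ (k + 1) * (t + 1) ^ m)
      ((k + 1) * (t ^ k * (t + 1) ^ m) + m * (t ^ (k + 1) * (t + 1) ^ (m - 1))) t := by
  have hzpow := (hasDerivAt_zpow m (t + 1) (Or.inl ht)).comp t ((hasDerivAt_id t).add_const 1)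
  refine ((hasDerivAt_pow (k + 1) t).mul hzpow).congr_deriv ?_
  simp only [Function.comp_apply, id, Nat.add_sub_cancel, Nat.cast_add, Nat.cast_one]
  ring

lemma tendsto_pow_succ_mul_add_one_zpow_atTop (hkm : (k : ℤ) + m < -1) :
    Tendsto (fun t : ℝ => t ^ (k + 1) * (t + 1) ^ m) atTop (𝓝 0) := by
  refine squeeze_zero' ?_ ?_ (((tendsto_zpow_atTop_zero (n := ((k + 1 : ℕ) : ℤ) + m)
    (by push_cast; omega))).comp (tendsto_atTop_add_const_right _ 1 tendsto_id))
  · filter_upwards [eventually_ge_atTop 0] with t ht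
    have : 0 < t + 1 := by linarith
    positivity
  · filter_upwards [eventually_ge_atTop 0] with t ht
    exact pow_mul_add_one_zpow_le (k + 1) m ht

/-- Integration by parts of `t^{k+1} (t+1)^m`, whose boundary terms vanish. -/
lemma add_one_mul_betaPrimeIntegral (hkm : (k : ℤ) + m < -1) :
    (k + 1) * betaPrimeIntegral k m = -m * betaPrimeIntegral (k + 1) (m - 1) := by
  have hk := integrableOn_pow_mul_add_one_zpow hkm
  have hk' := integrableOn_pow_mul_add_one_zpow (k := k + 1) (m := m - 1) (by push_cast; omega)
  have hibp := integral_Ioi_of_hasDerivAt_of_tendsto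
    ((continuousOn_pow_mul_add_one_zpow (k + 1) m).continuousWithinAt self_mem_Ici)
    (fun t (ht : 0 < t) => hasDerivAt_pow_succ_mul_add_one_zpow k m (by positivity))
    ((hk.const_mul _).add (hk'.const_mul _)) (tendsto_pow_succ_mul_add_one_zpow_atTop hkm)
  rw [integral_add (hk.const_mul _) (hk'.const_mul _), integral_const_mul,
    integral_const_mul] at hibp
  rw [zero_pow k.succ_ne_zero, zero_mul, sub_zero] at hibp
  rw [betaPrimeIntegral, betaPrimeIntegral]
  linarith

lemma betaPrimeIntegral_div_sub_one (hkm : (k : ℤ) + m < -1) :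
    betaPrimeIntegral k m / betaPrimeIntegral k (m - 1) = m / (m + k + 1) := by
  have hpos := betaPrimeIntegral_pos (k := k) (m := m - 1) (by omega)
  have hsum := betaPrimeIntegral_eq_add hkm
  have hibp := add_one_mul_betaPrimeIntegral hkm
  have hkm' : (m : ℝ) + k + 1 < 0 := by exact_mod_cast (by omega : m + k + 1 < 0)
  rw [div_eq_div_iff hpos.ne' hkm'.ne]
  linear_combination (m : ℝ) * hsum + hibp

end BetaPrimeIntegral

lemma integral_Ioo_pow_mul_mul_add_one_zpow (k : ℕ) (m : ℤ) {u : ℝ} (hu : 0 < u) :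
    ∫ y in Ioo (0 : ℝ) 1, y ^ k * (y * u + 1) ^ m
      = (u ^ (k + 1))⁻¹ * ∫ t in (0 : ℝ)..u, t ^ k * (t + 1) ^ m := by
  have hscale : ∀ y : ℝ, y ^ k * (y * u + 1) ^ m = (u ^ k)⁻¹ * ((y * u) ^ k * (y * u + 1) ^ m) :=
    fun y => by field_simp; ring
  rw [← integral_Ioc_eq_integral_Ioo, ← intervalIntegral.integral_of_le zero_le_one]
  simp_rw [hscale]
  rw [intervalIntegral.integral_const_mul,
    intervalIntegral.integral_comp_mul_right (fun t => t ^ k * (t + 1) ^ m) hu.ne',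
    zero_mul, one_mul, smul_eq_mul, pow_succ, mul_inv, mul_assoc]

lemma tendsto_integral_Ioo_div_integral_Ioo {k : ℕ} {m : ℤ} (hkm : (k : ℤ) + m < -1) :
    Tendsto (fun u : ℝ => (∫ y in Ioo (0 : ℝ) 1, y ^ k * (y * u + 1) ^ m) /
        ∫ y in Ioo (0 : ℝ) 1, y ^ k * (y * u + 1) ^ (m - 1))
      atTop (𝓝 (betaPrimeIntegral k m / betaPrimeIntegral k (m - 1))) := by
  have hlim : ∀ m : ℤ, (k : ℤ) + m < -1 → Tendsto (fun u : ℝ => ∫ t in (0 : ℝ)..u,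
      t ^ k * (t + 1) ^ m) atTop (𝓝 (betaPrimeIntegral k m)) := fun m hkm =>
    intervalIntegral_tendsto_integral_Ioi 0 (integrableOn_pow_mul_add_one_zpow hkm) tendsto_id
  refine ((hlim m hkm).div (hlim (m - 1) (by omega))
    (betaPrimeIntegral_pos (by omega)).ne').congr' ?_
  filter_upwards [eventually_gt_atTop 0] with u hu
  rw [Pi.div_apply, integral_Ioo_pow_mul_mul_add_one_zpow k m hu,
    integral_Ioo_pow_mul_mul_add_one_zpow k _ hu, mul_div_mul_left _ _ (by positivity)]

theorem stmt9_general (p q : ℕ) (hq : 1 ≤ q)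
    (φ : ℝ → ℝ)
    (hφ : ∀ u : ℝ, φ u = (1 / ((p : ℝ) + q + 1)) *
      (∫ y in Set.Ioo (0 : ℝ) 1, y ^ (q - 1) * (y * u + 1) ^ (-((p : ℤ) + q + 1))) /
      (∫ y in Set.Ioo (0 : ℝ) 1, y ^ (q - 1) * (y * u + 1) ^ (-((p : ℤ) + q + 2)))) :
    Tendsto φ atTop (nhds (1 / ((p : ℝ) + 1))) := by
  have hkm : ((q - 1 : ℕ) : ℤ) + -((p : ℤ) + q + 1) < -1 := by omega
  have hexp : -((p : ℤ) + q + 1) - 1 = -((p : ℤ) + q + 2) := by ring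
  have hlim := (tendsto_integral_Ioo_div_integral_Ioo hkm).const_mul (1 / ((p : ℝ) + q + 1))
  rw [betaPrimeIntegral_div_sub_one hkm, hexp] at hlim
  convert hlim.congr fun u => (by rw [hφ u, mul_div_assoc] : _ = φ u) using 2
  have hp1 : (p : ℝ) + 1 ≠ 0 := by positivity
  rw [Nat.cast_sub hq]
  push_cast
  rw [show -((p : ℝ) + q + 1) + (q - 1) + 1 = -(p + 1) by ring]
  field_simp

/-- The boundary function φ of the Kubokawa class under quadratic loss satisfies
lim_{u→∞} φ(u) = 1/(p+1). -/
theorem stmt9 (p q : ℕ) (hp : 1 ≤ p) (hq : 1 ≤ q)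
    (φ : ℝ → ℝ)
    (hφ : ∀ u : ℝ, φ u = (1 / ((p : ℝ) + q + 1)) *
      (∫ y in Set.Ioo (0 : ℝ) 1, y ^ (q - 1) * (y * u + 1) ^ (-((p : ℤ) + q + 1))) /
      (∫ y in Set.Ioo (0 : ℝ) 1, y ^ (q - 1) * (y * u + 1) ^ (-((p : ℤ) + q + 2)))) :
    Tendsto φ atTop (nhds (1 / ((p : ℝ) + 1))) :=
  stmt9_general p q hq φ hφ
end

section
/- Let V₁ ~ Gamma(p, 1/σ₁) and V₂ ~ Gamma(q, 1/σ₂) be independent, with p, q ≥ 2 integers and σ₁ ≤ σ₂. For estimating σ₂ under quadratic loss (δ/σ₂ − 1)², the estimator δ_S = max{V₂/(q+1), (V₁+V₂)/(p+q+1)} has risk nowhere larger than that of δ₀ = V₂/(q+1), and strictly smaller for some parameter values. -/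
/-!
Substitute `v₁ = y z`, `v₂ = y`. Both estimators are positively homogeneous, `δ (y z) y = y t(z)`,
so for fixed `z` the risk integrand is `(t y / σ₂ - 1)² y^(p+q-1) e^(-λ y)` up to a positive factor,
with `λ = z / σ₁ + 1 / σ₂`, and its `y`-integral is an explicit quadratic in `t`. The difference of
its values at `t = max (1/(q+1)) ((z+1)/(p+q+1))` and at `t₀ = 1/(q+1)` has the sign of
`(t - t₀) ((p+q+1) (t + t₀) - 2 σ₂ λ)`. This vanishes where the truncation is inactive, and where it
is active, i.e. `(q+1) z > p`, it is negative because `σ₂ λ ≥ z + 1` when `σ₁ ≤ σ₂`.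
-/

open MeasureTheory Set Real
open scoped Nat

lemma integrableOn_pow_mul_exp_neg_mul_Ioi (n : ℕ) {r : ℝ} (hr : 0 < r) :
    IntegrableOn (fun x : ℝ => x ^ n * exp (-(r * x))) (Ioi 0) := by
  refine (integrableOn_rpow_mul_exp_neg_mul_rpow (s := n) (p := 1)
    (by linarith [n.cast_nonneg (α := ℝ)]) one_pos hr).congr_fun (fun x _ => ?_) measurableSet_Ioi
  simp [rpow_one, rpow_natCast]

lemma integral_pow_mul_exp_neg_mul_Ioi (n : ℕ) {r : ℝ} (hr : 0 < r) :
    ∫ x in Ioi (0 : ℝ), x ^ n * exp (-(r * x)) = n ! / r ^ (n + 1) := by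
  have h := integral_rpow_mul_exp_neg_mul_Ioi (a := n + 1) (by positivity) hr
  simp only [add_sub_cancel_right, rpow_natCast] at h
  rw [h, Gamma_nat_eq_factorial, one_div, inv_rpow hr.le, ← Nat.cast_succ, rpow_natCast]
  field_simp

lemma integral_sq_sub_sq_mul_pow_mul_exp_neg_mul_Ioi (n : ℕ) {r : ℝ} (hr : 0 < r) (s₀ s₁ : ℝ) :
    ∫ y in Ioi (0 : ℝ), ((s₁ * y - 1) ^ 2 - (s₀ * y - 1) ^ 2) * (y ^ n * exp (-(r * y))) =
      (n + 1)! / r ^ (n + 2) * (s₁ - s₀) * ((n + 2) * (s₁ + s₀) / r - 2) := by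
  have hpt : ∀ y : ℝ, ((s₁ * y - 1) ^ 2 - (s₀ * y - 1) ^ 2) * (y ^ n * exp (-(r * y))) =
      (s₁ ^ 2 - s₀ ^ 2) * (y ^ (n + 2) * exp (-(r * y))) -
        2 * (s₁ - s₀) * (y ^ (n + 1) * exp (-(r * y))) := fun y => by ring
  simp_rw [hpt]
  rw [integral_sub ((integrableOn_pow_mul_exp_neg_mul_Ioi _ hr).const_mul _)
      ((integrableOn_pow_mul_exp_neg_mul_Ioi _ hr).const_mul _),
    integral_const_mul, integral_const_mul, integral_pow_mul_exp_neg_mul_Ioi _ hr,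
    integral_pow_mul_exp_neg_mul_Ioi _ hr, Nat.factorial_succ (n + 1)]
  push_cast
  field_simp
  ring

local notation "μ₊" => volume.restrict (Ioi (0 : ℝ))

lemma integral_mul_comp_mul_Ioi (g : ℝ → ℝ) {y : ℝ} (hy : 0 < y) :
    ∫ z in Ioi (0 : ℝ), y * g (y * z) = ∫ x in Ioi (0 : ℝ), g x := by
  rw [integral_const_mul, integral_comp_mul_left_Ioi g 0 hy, mul_zero, smul_eq_mul,
    mul_inv_cancel_left₀ hy.ne']

lemma integrableOn_mul_comp_mul_Ioi {g : ℝ → ℝ} (hg : IntegrableOn g (Ioi 0)) {y : ℝ}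
    (hy : 0 < y) : IntegrableOn (fun z => y * g (y * z)) (Ioi 0) := by
  refine Integrable.const_mul ?_ y
  rwa [← IntegrableOn, integrableOn_Ioi_comp_mul_left_iff g 0 hy, mul_zero]

section ScaleFst

variable {H : ℝ × ℝ → ℝ}

lemma integrable_mul_comp_scale_fst (hHm : Measurable H) (hH : Integrable H (μ₊.prod μ₊)) :
    Integrable (fun w : ℝ × ℝ => w.2 * H (w.2 * w.1, w.2)) (μ₊.prod μ₊) := by
  refine (integrable_prod_iff' (by fun_prop)).2 ⟨?_, ?_⟩
  · filter_upwards [hH.prod_left_ae, ae_restrict_mem measurableSet_Ioi] with y hyint hy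
    exact integrableOn_mul_comp_mul_Ioi hyint hy
  · refine hH.integral_norm_prod_right.congr ?_
    filter_upwards [ae_restrict_mem measurableSet_Ioi] with y (hy : 0 < y)
    simp only [norm_mul, Real.norm_of_nonneg hy.le]
    exact (integral_mul_comp_mul_Ioi (fun x => ‖H (x, y)‖) hy).symm

lemma integral_mul_comp_scale_fst (hHm : Measurable H) (hH : Integrable H (μ₊.prod μ₊)) :
    ∫ w, w.2 * H (w.2 * w.1, w.2) ∂(μ₊.prod μ₊) = ∫ w, H w ∂(μ₊.prod μ₊) := by
  rw [integral_prod_symm _ (integrable_mul_comp_scale_fst hHm hH), integral_prod_symm _ hH]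
  refine integral_congr_ae ?_
  filter_upwards [ae_restrict_mem measurableSet_Ioi] with y (hy : 0 < y)
  exact integral_mul_comp_mul_Ioi (fun x => H (x, y)) hy

lemma setIntegral_Ioi_prod_Ioi_eq_integral_mul_comp (hHm : Measurable H)
    (hH : IntegrableOn H (Ioi 0 ×ˢ Ioi 0)) :
    ∫ v in Ioi (0 : ℝ) ×ˢ Ioi (0 : ℝ), H v =
      ∫ z in Ioi (0 : ℝ), ∫ y in Ioi (0 : ℝ), y * H (y * z, y) := by
  rw [IntegrableOn, Measure.volume_eq_prod, ← Measure.prod_restrict] at hH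
  rw [Measure.volume_eq_prod, ← Measure.prod_restrict, ← integral_mul_comp_scale_fst hHm hH,
    integral_prod _ (integrable_mul_comp_scale_fst hHm hH)]

lemma integrableOn_integral_mul_comp (hHm : Measurable H)
    (hH : IntegrableOn H (Ioi 0 ×ˢ Ioi 0)) :
    IntegrableOn (fun z => ∫ y in Ioi (0 : ℝ), y * H (y * z, y)) (Ioi 0) := by
  rw [IntegrableOn, Measure.volume_eq_prod, ← Measure.prod_restrict] at hH
  exact (integrable_mul_comp_scale_fst hHm hH).integral_prod_left

end ScaleFst

lemma setIntegral_Ioi_neg {F : ℝ → ℝ} {a t : ℝ} (hat : a ≤ t) (hF : IntegrableOn F (Ioi a))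
    (hle : ∀ x ∈ Ioi a, F x ≤ 0) (hlt : ∀ x ∈ Ioi t, F x < 0) :
    ∫ x in Ioi a, F x < 0 := by
  have hpos : 0 < ∫ x in Ioi a, -F x := by
    refine (setIntegral_pos_iff_support_of_nonneg_ae ?_ hF.neg).2 ?_
    · filter_upwards [ae_restrict_mem measurableSet_Ioi] with x hx
      exact neg_nonneg.2 (hle x hx)
    · refine lt_of_lt_of_le ?_ (measure_mono (s := Ioi t) fun x hx =>
        ⟨neg_ne_zero.2 (hlt x hx).ne, hat.trans_lt hx⟩)
      simp
  rw [integral_neg] at hpos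
  linarith

noncomputable def gammaDens (σ : ℝ) (p : ℕ) (x : ℝ) : ℝ :=
  x ^ (p - 1) * exp (-x / σ) / (σ ^ p * (p - 1)!)

noncomputable def riskIntegrand (σ₁ σ₂ : ℝ) (p q : ℕ) (δ : ℝ → ℝ → ℝ) (v : ℝ × ℝ) : ℝ :=
  (δ v.1 v.2 / σ₂ - 1) ^ 2 * gammaDens σ₁ p v.1 * gammaDens σ₂ q v.2

noncomputable def bestEquivariant (q : ℕ) (_ v₂ : ℝ) : ℝ :=
  v₂ / ((q : ℝ) + 1)

noncomputable def stein (p q : ℕ) (v₁ v₂ : ℝ) : ℝ :=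
  max (v₂ / ((q : ℝ) + 1)) ((v₁ + v₂) / ((p : ℝ) + q + 1))

lemma continuous_bestEquivariant (q : ℕ) :
    Continuous fun v : ℝ × ℝ => bestEquivariant q v.1 v.2 := by
  unfold bestEquivariant
  fun_prop

lemma continuous_stein (p q : ℕ) : Continuous fun v : ℝ × ℝ => stein p q v.1 v.2 := by
  unfold stein
  fun_prop

lemma abs_bestEquivariant_le (q : ℕ) {x y : ℝ} (hx : 0 < x) (hy : 0 < y) :
    |bestEquivariant q x y| ≤ x + y := by
  rw [bestEquivariant, abs_of_nonneg (by positivity)]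
  exact (div_le_self hy.le (by linarith [q.cast_nonneg (α := ℝ)])).trans (by linarith)

lemma abs_stein_le (p q : ℕ) {x y : ℝ} (hx : 0 < x) (hy : 0 < y) : |stein p q x y| ≤ x + y := by
  rw [stein, abs_of_nonneg (le_max_of_le_left (by positivity))]
  refine max_le ((abs_bestEquivariant_le q hx hy).trans' (le_abs_self _)) (div_le_self (by linarith)
    (by linarith [p.cast_nonneg (α := ℝ), q.cast_nonneg (α := ℝ)]))

lemma bestEquivariant_mul (q : ℕ) (y z : ℝ) :
    bestEquivariant q (y * z) y = y * (1 / ((q : ℝ) + 1)) := by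
  rw [bestEquivariant, mul_one_div]

lemma stein_mul (p q : ℕ) {y : ℝ} (hy : 0 ≤ y) (z : ℝ) :
    stein p q (y * z) y = y * max (1 / ((q : ℝ) + 1)) ((z + 1) / ((p : ℝ) + q + 1)) := by
  rw [stein, mul_max_of_nonneg _ _ hy]
  congr 1 <;> ring

lemma gammaDens_succ (σ : ℝ) (a : ℕ) (x : ℝ) :
    gammaDens σ (a + 1) x = (σ ^ (a + 1) * a !)⁻¹ * (x ^ a * exp (-(σ⁻¹ * x))) := by
  rw [gammaDens, Nat.add_sub_cancel, neg_div, ← inv_mul_eq_div σ, div_eq_inv_mul]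

lemma continuous_gammaDens (σ : ℝ) (p : ℕ) : Continuous (gammaDens σ p) := by
  unfold gammaDens
  fun_prop

lemma gammaDens_nonneg {σ : ℝ} (hσ : 0 < σ) (p : ℕ) {x : ℝ} (hx : 0 ≤ x) :
    0 ≤ gammaDens σ p x := by
  unfold gammaDens
  positivity

lemma integrableOn_sq_one_add_div_mul_gammaDens {σ : ℝ} (hσ : 0 < σ) (s : ℝ) (a : ℕ) :
    IntegrableOn (fun x => (1 + x / s) ^ 2 * gammaDens σ (a + 1) x) (Ioi 0) := by
  have hr : 0 < σ⁻¹ := inv_pos.2 hσ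
  have h : IntegrableOn _ (Ioi (0 : ℝ)) := (((integrableOn_pow_mul_exp_neg_mul_Ioi a hr).add
      ((integrableOn_pow_mul_exp_neg_mul_Ioi (a + 1) hr).const_mul (2 / s))).add
      ((integrableOn_pow_mul_exp_neg_mul_Ioi (a + 2) hr).const_mul (1 / s ^ 2))).const_mul
      (σ ^ (a + 1) * a !)⁻¹
  refine h.congr_fun (fun x _ => ?_) measurableSet_Ioi
  simp only [gammaDens_succ, Pi.add_apply]
  ring

lemma continuous_riskIntegrand (σ₁ σ₂ : ℝ) (p q : ℕ) {δ : ℝ → ℝ → ℝ}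
    (hδ : Continuous fun v : ℝ × ℝ => δ v.1 v.2) : Continuous (riskIntegrand σ₁ σ₂ p q δ) := by
  have := continuous_gammaDens σ₁ p
  have := continuous_gammaDens σ₂ q
  unfold riskIntegrand
  fun_prop

lemma integrableOn_riskIntegrand {σ₁ σ₂ : ℝ} (h1 : 0 < σ₁) (h2 : 0 < σ₂) (a b : ℕ)
    {δ : ℝ → ℝ → ℝ} (hδ : Continuous fun v : ℝ × ℝ => δ v.1 v.2)
    (hδb : ∀ x y : ℝ, 0 < x → 0 < y → |δ x y| ≤ x + y) :
    IntegrableOn (riskIntegrand σ₁ σ₂ (a + 1) (b + 1) δ) (Ioi 0 ×ˢ Ioi 0) := by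
  refine Integrable.mono' (g := fun v : ℝ × ℝ => ((1 + v.1 / σ₂) ^ 2 * gammaDens σ₁ (a + 1) v.1) *
      ((1 + v.2 / σ₂) ^ 2 * gammaDens σ₂ (b + 1) v.2)) ?_ ?_ ?_
  · rw [Measure.volume_eq_prod, ← Measure.prod_restrict]
    exact (integrableOn_sq_one_add_div_mul_gammaDens h1 σ₂ a).mul_prod
      (integrableOn_sq_one_add_div_mul_gammaDens h2 σ₂ b)
  · exact (continuous_riskIntegrand _ _ _ _ hδ).aestronglyMeasurable
  · filter_upwards [ae_restrict_mem (measurableSet_Ioi.prod measurableSet_Ioi)]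
      with v ⟨hx, hy⟩
    rw [mem_Ioi] at hx hy
    have hloss : (δ v.1 v.2 / σ₂ - 1) ^ 2 ≤ ((1 + v.1 / σ₂) * (1 + v.2 / σ₂)) ^ 2 := by
      have hle : |δ v.1 v.2 / σ₂ - 1| ≤ (1 + v.1 / σ₂) * (1 + v.2 / σ₂) := calc
        |δ v.1 v.2 / σ₂ - 1| ≤ |δ v.1 v.2| / σ₂ + 1 := by
          simpa [abs_div, abs_of_pos h2] using abs_sub (δ v.1 v.2 / σ₂) 1
        _ ≤ (v.1 + v.2) / σ₂ + 1 := by gcongr; exact hδb _ _ hx hy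
        _ ≤ (1 + v.1 / σ₂) * (1 + v.2 / σ₂) := by
          rw [add_div]; nlinarith [mul_pos (div_pos hx h2) (div_pos hy h2)]
      simpa only [sq_abs] using pow_le_pow_left₀ (abs_nonneg _) hle 2
    have hd1 := gammaDens_nonneg h1 (a + 1) hx.le
    have hd2 := gammaDens_nonneg h2 (b + 1) hy.le
    rw [Real.norm_of_nonneg (by unfold riskIntegrand; positivity), riskIntegrand]
    calc _ ≤ ((1 + v.1 / σ₂) * (1 + v.2 / σ₂)) ^ 2 * gammaDens σ₁ (a + 1) v.1 *
          gammaDens σ₂ (b + 1) v.2 := by gcongr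
      _ = _ := by ring

lemma mul_riskIntegrand_comp_mul (σ₁ σ₂ : ℝ) (a b : ℕ) {δ : ℝ → ℝ → ℝ} {y z t : ℝ}
    (hδ : δ (y * z) y = y * t) :
    y * riskIntegrand σ₁ σ₂ (a + 1) (b + 1) δ (y * z, y) =
      z ^ a / (σ₁ ^ (a + 1) * a ! * (σ₂ ^ (b + 1) * b !)) *
        ((t / σ₂ * y - 1) ^ 2 * (y ^ (a + b + 1) * exp (-((z / σ₁ + 1 / σ₂) * y)))) := by
  have hexp : exp (-(σ₁⁻¹ * (y * z))) * exp (-(σ₂⁻¹ * y)) =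
      exp (-((z / σ₁ + 1 / σ₂) * y)) := by
    rw [← exp_add]; congr 1; ring
  simp only [riskIntegrand, gammaDens_succ, hδ]
  rw [← hexp]
  ring

/-- Up to a positive factor, the difference between the risks of `stein` and `bestEquivariant`
conditional on `V₁ / V₂ = z`. -/
noncomputable def steinFactor (p q σ₁ σ₂ z : ℝ) : ℝ :=
  (max (1 / (q + 1)) ((z + 1) / (p + q + 1)) / σ₂ - 1 / (q + 1) / σ₂) *
    ((p + q + 1) * (max (1 / (q + 1)) ((z + 1) / (p + q + 1)) / σ₂ + 1 / (q + 1) / σ₂) /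
      (z / σ₁ + 1 / σ₂) - 2)

lemma steinFactor_neg {p q z σ₁ σ₂ : ℝ} (hp : 0 ≤ p) (hq : 0 ≤ q) (h1 : 0 < σ₁)
    (h12 : σ₁ ≤ σ₂) (hz : p < (q + 1) * z) : steinFactor p q σ₁ σ₂ z < 0 := by
  have h2 : 0 < σ₂ := h1.trans_le h12
  have hk : 0 < q + 1 := by linarith
  have hz0 : 0 < z := pos_of_mul_pos_right (hp.trans_lt hz) hk.le
  have hm : 1 / (q + 1) < (z + 1) / (p + q + 1) := by
    rw [div_lt_div_iff₀ hk (by linarith)]; linarith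
  rw [steinFactor, max_eq_right hm.le]
  refine mul_neg_of_pos_of_neg (sub_pos.2 (div_lt_div_of_pos_right hm h2)) ?_
  have hpk : (p + q + 1) / (q + 1) < z + 1 := by
    rw [div_lt_iff₀ hk]; linarith
  have hsum : (p + q + 1) * ((z + 1) / (p + q + 1) / σ₂ + 1 / (q + 1) / σ₂) =
      (z + 1 + (p + q + 1) / (q + 1)) / σ₂ := by
    field_simp
  have hσ : (z + 1 + (p + q + 1) / (q + 1)) / σ₂ < 2 * (z / σ₁ + 1 / σ₂) := calc
    _ < (2 * (z + 1)) / σ₂ := by gcongr; linarith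
    _ = 2 * (z / σ₂ + 1 / σ₂) := by ring
    _ ≤ 2 * (z / σ₁ + 1 / σ₂) := by gcongr
  rwa [sub_neg, div_lt_iff₀ (by positivity), hsum]

lemma steinFactor_nonpos {p q z σ₁ σ₂ : ℝ} (hp : 0 ≤ p) (hq : 0 ≤ q) (h1 : 0 < σ₁)
    (h12 : σ₁ ≤ σ₂) : steinFactor p q σ₁ σ₂ z ≤ 0 := by
  rcases lt_or_ge p ((q + 1) * z) with hz | hz
  · exact (steinFactor_neg hp hq h1 h12 hz).le
  · have hm : (z + 1) / (p + q + 1) ≤ 1 / (q + 1) := by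
      rw [div_le_div_iff₀ (by linarith) (by linarith)]; linarith
    rw [steinFactor, max_eq_left hm, sub_self, zero_mul]

lemma integral_mul_riskIntegrand_sub_comp_mul {σ₁ σ₂ z : ℝ} (h1 : 0 < σ₁) (h2 : 0 < σ₂)
    (hz : 0 < z) (a b : ℕ) {δ₀ δ₁ : ℝ → ℝ → ℝ} {t₀ t₁ : ℝ}
    (hδ₀ : ∀ y, 0 < y → δ₀ (y * z) y = y * t₀) (hδ₁ : ∀ y, 0 < y → δ₁ (y * z) y = y * t₁) :
    ∫ y in Ioi (0 : ℝ), y * (riskIntegrand σ₁ σ₂ (a + 1) (b + 1) δ₁ (y * z, y) -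
        riskIntegrand σ₁ σ₂ (a + 1) (b + 1) δ₀ (y * z, y)) =
      z ^ a / (σ₁ ^ (a + 1) * a ! * (σ₂ ^ (b + 1) * b !)) *
        ((a + b + 2)! / (z / σ₁ + 1 / σ₂) ^ (a + b + 3) * ((t₁ / σ₂ - t₀ / σ₂) *
          ((a + b + 3) * (t₁ / σ₂ + t₀ / σ₂) / (z / σ₁ + 1 / σ₂) - 2))) := by
  rw [setIntegral_congr_fun measurableSet_Ioi fun y (hy : 0 < y) => by
      rw [mul_sub, mul_riskIntegrand_comp_mul σ₁ σ₂ a b (hδ₁ y hy),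
        mul_riskIntegrand_comp_mul σ₁ σ₂ a b (hδ₀ y hy), ← mul_sub, ← sub_mul],
    integral_const_mul, integral_sq_sub_sq_mul_pow_mul_exp_neg_mul_Ioi _ (by positivity)]
  push_cast
  ring

theorem integral_riskIntegrand_stein_lt {p q : ℕ} (hp : 1 ≤ p) (hq : 1 ≤ q) {σ₁ σ₂ : ℝ}
    (h1 : 0 < σ₁) (h12 : σ₁ ≤ σ₂) :
    ∫ v in Ioi (0 : ℝ) ×ˢ Ioi (0 : ℝ), riskIntegrand σ₁ σ₂ p q (stein p q) v <
      ∫ v in Ioi (0 : ℝ) ×ˢ Ioi (0 : ℝ), riskIntegrand σ₁ σ₂ p q (bestEquivariant q) v := by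
  obtain ⟨a, rfl⟩ := Nat.exists_eq_add_of_le' hp
  obtain ⟨b, rfl⟩ := Nat.exists_eq_add_of_le' hq
  have h2 : 0 < σ₂ := h1.trans_le h12
  have hS := integrableOn_riskIntegrand h1 h2 a b (continuous_stein (a + 1) (b + 1))
    fun _ _ => abs_stein_le (a + 1) (b + 1)
  have h0 := integrableOn_riskIntegrand h1 h2 a b (continuous_bestEquivariant (b + 1))
    fun _ _ => abs_bestEquivariant_le (b + 1)
  have hHm : Measurable fun v => riskIntegrand σ₁ σ₂ (a + 1) (b + 1) (stein (a + 1) (b + 1)) v -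
      riskIntegrand σ₁ σ₂ (a + 1) (b + 1) (bestEquivariant (b + 1)) v :=
    ((continuous_riskIntegrand _ _ _ _ (continuous_stein _ _)).sub
      (continuous_riskIntegrand _ _ _ _ (continuous_bestEquivariant _))).measurable
  have hslice (z : ℝ) (hz : 0 < z) := integral_mul_riskIntegrand_sub_comp_mul h1 h2 hz a b
    (fun y _ => bestEquivariant_mul (b + 1) y z) (fun y hy => stein_mul (a + 1) (b + 1) hy.le z)
  have hcast : (a : ℝ) + b + 3 = ((a + 1 : ℕ) : ℝ) + ((b + 1 : ℕ) : ℝ) + 1 := by push_cast; ring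
  rw [← sub_neg, ← integral_sub hS h0,
    setIntegral_Ioi_prod_Ioi_eq_integral_mul_comp hHm (hS.sub h0)]
  refine setIntegral_Ioi_neg (t := ((a + 1 : ℕ) : ℝ) / (((b + 1 : ℕ) : ℝ) + 1)) (by positivity)
    (integrableOn_integral_mul_comp hHm (hS.sub h0)) (fun z (hz : 0 < z) => ?_)
    (fun z (hz : _ < z) => ?_)
  · rw [hslice z hz, hcast]
    exact mul_nonpos_of_nonneg_of_nonpos (by positivity) (mul_nonpos_of_nonneg_of_nonpos
      (by positivity) (steinFactor_nonpos (by positivity) (by positivity) h1 h12))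
  · have hz0 : 0 < z := lt_of_le_of_lt (by positivity) hz
    rw [hslice z hz0, hcast]
    refine mul_neg_of_pos_of_neg (by positivity) (mul_neg_of_pos_of_neg
      (by positivity) (steinFactor_neg (by positivity) (by positivity) h1 h12 ?_))
    rwa [div_lt_iff₀' (by positivity)] at hz

/-- Stein-type domination for σ₂: under quadratic loss, δ_S = max{V₂/(q+1), (V₁+V₂)/(p+q+1)}
dominates the BAEE δ₀ = V₂/(q+1) whenever σ₁ ≤ σ₂, strictly for some parameter values. -/
theorem stmt16 (p q : ℕ) (hp : 2 ≤ p) (hq : 2 ≤ q)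
    (risk : ℝ → ℝ → (ℝ → ℝ → ℝ) → ℝ)
    (hrisk : ∀ σ₁ σ₂ : ℝ, ∀ δ : ℝ → ℝ → ℝ, risk σ₁ σ₂ δ =
      ∫ v in Set.Ioi (0 : ℝ) ×ˢ Set.Ioi (0 : ℝ),
        (δ v.1 v.2 / σ₂ - 1) ^ 2 *
          (v.1 ^ (p - 1) * Real.exp (-v.1 / σ₁) / (σ₁ ^ p * (Nat.factorial (p - 1)))) *
          (v.2 ^ (q - 1) * Real.exp (-v.2 / σ₂) / (σ₂ ^ q * (Nat.factorial (q - 1))))) :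
    (∀ σ₁ σ₂ : ℝ, 0 < σ₁ → σ₁ ≤ σ₂ →
      risk σ₁ σ₂ (fun v₁ v₂ => max (v₂ / ((q : ℝ) + 1)) ((v₁ + v₂) / ((p : ℝ) + q + 1))) ≤
        risk σ₁ σ₂ (fun v₁ v₂ => v₂ / ((q : ℝ) + 1))) ∧
    (∃ σ₁ σ₂ : ℝ, 0 < σ₁ ∧ σ₁ ≤ σ₂ ∧
      risk σ₁ σ₂ (fun v₁ v₂ => max (v₂ / ((q : ℝ) + 1)) ((v₁ + v₂) / ((p : ℝ) + q + 1))) <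
        risk σ₁ σ₂ (fun v₁ v₂ => v₂ / ((q : ℝ) + 1))) := by
  have hlt : ∀ σ₁ σ₂ : ℝ, 0 < σ₁ → σ₁ ≤ σ₂ →
      risk σ₁ σ₂ (fun v₁ v₂ => max (v₂ / ((q : ℝ) + 1)) ((v₁ + v₂) / ((p : ℝ) + q + 1))) <
        risk σ₁ σ₂ (fun v₁ v₂ => v₂ / ((q : ℝ) + 1)) := fun σ₁ σ₂ h1 h12 => by
    rw [hrisk, hrisk]
    exact integral_riskIntegrand_stein_lt (by omega) (by omega) h1 h12
  exact ⟨fun σ₁ σ₂ h1 h12 => (hlt σ₁ σ₂ h1 h12).le, 1, 1, one_pos, le_rfl, hlt 1 1 one_pos le_rfl⟩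
end
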